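/- arXiv:math/0511751 — 2 statements merged into one kernel-verified Lean document; each statement's English description precedes it below -/
import Mathlib

section
/- Let P be a d-polytope (d ≥ 3), S a simplex facet of P in bounded position, F and N disjoint subsets of the facets adjacent to S with F nonsimple, and let v ∈ N(S; F, N; P). Then the relative interior of S and of every facet in N lies in the interior of conv(P ∪ {v}). -/
open Set
open scoped Classical

noncomputable section

abbrev Pt (d : ℕ) := EuclideanSpace ℝ (Fin d)

/-- A polytope: convex hull of finitely many points. -/
def IsPolytope {d : ℕ} (P : Set (Pt d)) : Prop :=
  ∃ V : Finset (Pt d), P = convexHull ℝ (V : Set (Pt d))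

/-- Faces of a polytope: the polytope itself, the empty set, and exposed faces. -/
def IsFace {d : ℕ} (P F : Set (Pt d)) : Prop :=
  F = P ∨ F = ∅ ∨ ∃ (u : Pt d) (c : ℝ),
    (∀ x ∈ P, c ≤ (inner ℝ u x : ℝ)) ∧ F = {x ∈ P | (inner ℝ u x : ℝ) = c}

/-- Dimension of a face (the empty face has dimension `-1`). -/
def faceDim {d : ℕ} (F : Set (Pt d)) : ℤ :=
  if F = ∅ then -1 else (Module.finrank ℝ (vectorSpan ℝ F) : ℤ)

/-- A full-dimensional polytope in `ℝ^d`. -/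
def IsDPolytope {d : ℕ} (P : Set (Pt d)) : Prop :=
  IsPolytope P ∧ faceDim P = (d : ℤ)

def IsFacet {d : ℕ} (P F : Set (Pt d)) : Prop :=
  IsFace P F ∧ faceDim F = (d : ℤ) - 1

def IsVertex {d : ℕ} (P : Set (Pt d)) (w : Pt d) : Prop :=
  IsFace P {w}

/-- The number of vertices of `P` lying in a given set. -/
def nverts {d : ℕ} (P X : Set (Pt d)) : ℕ :=
  Nat.card {w : Pt d // IsVertex P w ∧ w ∈ X}

/-- Entry `f_k` of the f-vector: the number of `k`-dimensional faces. -/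
def fk {d : ℕ} (k : ℤ) (P : Set (Pt d)) : ℕ :=
  Nat.card {F : Set (Pt d) // IsFace P F ∧ faceDim F = k}

/-- The number of facets of `P` containing the face `G`. -/
def fdeg {d : ℕ} (P G : Set (Pt d)) : ℕ :=
  Nat.card {F : Set (Pt d) // IsFacet P F ∧ G ⊆ F}

/-- `u, c` define the supporting hyperplane of the facet `G` of `P`,
oriented so that `P` lies on the `≥` side. -/
def SupportsFacet {d : ℕ} (P G : Set (Pt d)) (u : Pt d) (c : ℝ) : Prop :=
  (∀ x ∈ P, c ≤ (inner ℝ u x : ℝ)) ∧ G = {x ∈ P | (inner ℝ u x : ℝ) = c}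

/-- Two facets are adjacent if they intersect in a ridge. -/
def AdjacentFacet {d : ℕ} (P S G : Set (Pt d)) : Prop :=
  IsFacet P S ∧ IsFacet P G ∧ S ≠ G ∧ faceDim (S ∩ G) = (d : ℤ) - 2

/-- A simplex facet: a facet with exactly `d` vertices
(combinatorially a `(d-1)`-simplex). -/
def IsSimplexFacet {d : ℕ} (P S : Set (Pt d)) : Prop :=
  IsFacet P S ∧ nverts P S = d

/-- The facet `S` of `P` is in bounded position: the intersection of the
facet halfspaces other than the one of `S` is bounded. -/
def BoundedPosition {d : ℕ} (P S : Set (Pt d)) : Prop :=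
  Bornology.IsBounded {x : Pt d | ∀ G u c, IsFacet P G → G ≠ S →
    SupportsFacet P G u c → c ≤ (inner ℝ u x : ℝ)}

/-- The region `N(S; 𝓕, 𝓝; P)`: points strictly beyond the hyperplanes of
`S` and of the facets in `𝓝`, on the hyperplanes of facets in `𝓕`, and
strictly beneath all other facet hyperplanes of `P`. -/
def PseudoRegion {d : ℕ} (P S : Set (Pt d)) (𝓕 𝓝 : Set (Set (Pt d))) :
    Set (Pt d) :=
  {v | ∀ G u c, IsFacet P G → SupportsFacet P G u c →
    ((G = S ∨ G ∈ 𝓝) → (inner ℝ u v : ℝ) < c) ∧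
    (G ∈ 𝓕 → (inner ℝ u v : ℝ) = c) ∧
    ((G ≠ S ∧ G ∉ 𝓝 ∧ G ∉ 𝓕) → c < (inner ℝ u v : ℝ))}

/-- `𝓕` is nonsimple: there is no pair of adjacent facets in `𝓕` having a
common `(d-3)`-face with `S`. -/
def Nonsimple {d : ℕ} (P S : Set (Pt d)) (𝓕 : Set (Set (Pt d))) : Prop :=
  ¬ ∃ G G' R, G ∈ 𝓕 ∧ G' ∈ 𝓕 ∧ G ≠ G' ∧ AdjacentFacet P G G' ∧
    IsFace P R ∧ faceDim R = (d : ℤ) - 3 ∧ R ⊆ G ∩ G' ∩ S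

/-- The pseudo-stacking of `P` at the point `v`: `conv (P ∪ {v})`. -/
def pseudoStack {d : ℕ} (P : Set (Pt d)) (v : Pt d) : Set (Pt d) :=
  convexHull ℝ (P ∪ {v})

/-- The standing hypotheses of the pseudo-stacking construction. -/
def PseudoStackSetup {d : ℕ} (P S : Set (Pt d)) (𝓕 𝓝 : Set (Set (Pt d))) : Prop :=
  IsDPolytope P ∧ 3 ≤ d ∧ IsSimplexFacet P S ∧ BoundedPosition P S ∧
  (∀ G ∈ 𝓕 ∪ 𝓝, AdjacentFacet P S G) ∧ Disjoint 𝓕 𝓝 ∧ Nonsimple P S 𝓕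

/-!
Near a point `x` in the relative interior of a facet `T = P ∩ {⟪u, ·⟫ = c}`, the facet fills the
whole hyperplane. Projecting centrally from a point `p ∈ P` strictly above the hyperplane shows that
every point near `x` on the `P` side lies on a segment from `p` to a point of `T`; projecting from
`v`, which lies strictly below, does the same on the other side. Both segments lie in
`conv (P ∪ {v})`, so this set is a neighbourhood of `x`.
-/

open Filter Module
open scoped RealInnerProductSpace

section InnerProductSpace

open Topology

variable {E : Type*} [NormedAddCommGroup E] [InnerProductSpace ℝ E]

lemma eventually_exists_mem_segment_of_le_inner {T : Set E} {u x q : E} {c : ℝ}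
    (hx : ⟪u, x⟫ = c) (hq : c < ⟪u, q⟫) (hT : ∀ᶠ z in 𝓝 x, ⟪u, z⟫ = c → z ∈ T) :
    ∀ᶠ y in 𝓝 x, c ≤ ⟪u, y⟫ → ∃ z ∈ T, y ∈ segment ℝ q z := by
  set a := ⟪u, q⟫ - c with ha_def
  have ha : 0 < a := sub_pos.2 hq
  have hinner : Continuous fun y : E ↦ ⟪u, y⟫ := continuous_const.inner continuous_id
  -- central projection from `q` onto the hyperplane `⟪u, ·⟫ = c`
  let proj : E → E := fun y ↦ q + (a / (⟪u, q⟫ - ⟪u, y⟫)) • (y - q)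
  have hcont : ContinuousAt proj x :=
    continuousAt_const.add <| ContinuousAt.smul
      (continuousAt_const.div (continuousAt_const.sub hinner.continuousAt)
        (by rw [hx]; exact ha.ne'))
      (continuousAt_id.sub continuousAt_const)
  have hproj_x : proj x = x := by
    simp only [proj, hx, a, div_self ha.ne', one_smul, add_sub_cancel]
  have hprojT : ∀ᶠ y in 𝓝 x, ⟪u, proj y⟫ = c → proj y ∈ T :=
    (hproj_x ▸ hcont.tendsto).eventually hT
  have hbelow : ∀ᶠ y in 𝓝 x, ⟪u, y⟫ < ⟪u, q⟫ :=
    hinner.continuousAt.eventually_lt continuousAt_const (hx ▸ hq)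
  filter_upwards [hprojT, hbelow] with y hyT hyq hcy
  set b := ⟪u, q⟫ - ⟪u, y⟫ with hb_def
  have hb : 0 < b := sub_pos.2 hyq
  have hproj_y : proj y = q + (a / b) • (y - q) := rfl
  refine ⟨proj y, hyT ?_, 1 - b / a, b / a, ?_, by positivity, by ring, ?_⟩
  · rw [hproj_y, inner_add_right, inner_smul_right, inner_sub_right, ← neg_sub, mul_neg,
      div_mul_cancel₀ _ hb.ne', ha_def]
    ring
  · rw [sub_nonneg, div_le_one ha]
    linarith
  · rw [hproj_y, smul_add, smul_smul, div_mul_div_cancel₀ ha.ne', div_self hb.ne', one_smul]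
    module

lemma eventually_mem_of_mem_intrinsicInterior {T : Set E} {x : E}
    (hx : x ∈ intrinsicInterior ℝ T) : ∀ᶠ z in 𝓝 x, z ∈ affineSpan ℝ T → z ∈ T := by
  obtain ⟨y, hy, rfl⟩ := mem_intrinsicInterior.1 hx
  obtain ⟨t, ht, hts⟩ := (mem_nhds_subtype _ _ _).1 (mem_interior_iff_mem_nhds.1 hy)
  filter_upwards [ht] with z hz hzA using hts (show (⟨z, hzA⟩ : affineSpan ℝ T) ∈ _ from hz)

lemma setOf_inner_eq_subset_affineSpan [FiniteDimensional ℝ E] {T : Set E} {u : E} {c : ℝ}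
    (hu : u ≠ 0) (hT : ∀ z ∈ T, ⟪u, z⟫ = c) (hTne : T.Nonempty)
    (hdim : finrank ℝ (vectorSpan ℝ T) + 1 = finrank ℝ E) :
    {z | ⟪u, z⟫ = c} ⊆ affineSpan ℝ T := by
  obtain ⟨x, hx⟩ := hTne
  have hle : vectorSpan ℝ T ≤ (ℝ ∙ u)ᗮ := by
    refine Submodule.span_le.2 ?_
    rintro _ ⟨z, hz, w, hw, rfl⟩
    rw [SetLike.mem_coe, Submodule.mem_orthogonal_singleton_iff_inner_right]
    change ⟪u, z - w⟫ = 0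
    rw [inner_sub_right, hT z hz, hT w hw, sub_self]
  have heq : vectorSpan ℝ T = (ℝ ∙ u)ᗮ := by
    refine Submodule.eq_of_le_of_finrank_eq hle ?_
    have := Submodule.finrank_add_finrank_orthogonal (ℝ ∙ u)
    rw [finrank_span_singleton hu] at this
    omega
  intro z hz
  rw [← vsub_vadd z x]
  refine AffineSubspace.vadd_mem_of_mem_direction ?_ (subset_affineSpan ℝ T hx)
  rw [direction_affineSpan, heq, Submodule.mem_orthogonal_singleton_iff_inner_right, vsub_eq_sub,
    inner_sub_right, hz, hT x hx, sub_self]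

lemma intrinsicInterior_subset_interior_convexHull_union {P T : Set E} {u v : E} {c : ℝ}
    (hP : ∀ z ∈ P, c ≤ ⟪u, z⟫) (hT : T = {z ∈ P | ⟪u, z⟫ = c}) (hTP : T ≠ P)
    (hspan : {z | ⟪u, z⟫ = c} ⊆ affineSpan ℝ T) (hv : ⟪u, v⟫ < c) :
    intrinsicInterior ℝ T ⊆ interior (convexHull ℝ (P ∪ {v})) := by
  intro x hx
  have hxc : ⟪u, x⟫ = c := (hT ▸ intrinsicInterior_subset hx).2
  obtain ⟨p, hpP, hpc⟩ : ∃ p ∈ P, c < ⟪u, p⟫ := by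
    by_contra! hle
    exact hTP (hT ▸ sep_eq_self_iff_mem_true.2 fun z hz ↦ (hP z hz).antisymm' (hle z hz))
  have hlocal : ∀ᶠ z in 𝓝 x, ⟪u, z⟫ = c → z ∈ T :=
    (eventually_mem_of_mem_intrinsicInterior hx).mono fun z hz hzc ↦ hz (hspan hzc)
  have habove := eventually_exists_mem_segment_of_le_inner hxc hpc hlocal
  have hbelow := eventually_exists_mem_segment_of_le_inner (u := -u) (q := v) (c := -c)
    (by rw [inner_neg_left, hxc]) (by rw [inner_neg_left]; linarith)
    (hlocal.mono fun z hz hzc ↦ hz (by rw [inner_neg_left] at hzc; linarith))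
  have hQ := convex_convexHull ℝ (P ∪ {v})
  have hPQ : P ⊆ convexHull ℝ (P ∪ {v}) := subset_union_left.trans (subset_convexHull ℝ _)
  have hTQ : T ⊆ convexHull ℝ (P ∪ {v}) := hT ▸ (sep_subset _ _).trans hPQ
  have hvQ : v ∈ convexHull ℝ (P ∪ {v}) := subset_convexHull ℝ _ (mem_union_right _ rfl)
  rw [mem_interior_iff_mem_nhds]
  filter_upwards [habove, hbelow] with y hy₁ hy₂
  rcases le_total c ⟪u, y⟫ with hcy | hcy
  · obtain ⟨z, hzT, hyz⟩ := hy₁ hcy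
    exact hQ.segment_subset (hPQ hpP) (hTQ hzT) hyz
  · obtain ⟨z, hzT, hyz⟩ := hy₂ (by rw [inner_neg_left]; linarith)
    exact hQ.segment_subset hvQ (hTQ hzT) hyz

end InnerProductSpace

lemma IsFacet.intrinsicInterior_subset_interior_pseudoStack {d : ℕ} {P T : Set (Pt d)} {v : Pt d}
    (hPdim : faceDim P = d) (hT : IsFacet P T)
    (hv : ∀ u c, SupportsFacet P T u c → ⟪u, v⟫ < c) :
    intrinsicInterior ℝ T ⊆ interior (pseudoStack P v) := by
  obtain ⟨hface, hdim⟩ := hT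
  rcases T.eq_empty_or_nonempty with rfl | hTne
  · simp
  have hTP : T ≠ P := by rintro rfl; omega
  have hrank : finrank ℝ (vectorSpan ℝ T) + 1 = finrank ℝ (Pt d) := by
    rw [faceDim, if_neg hTne.ne_empty] at hdim
    rw [finrank_euclideanSpace_fin]
    omega
  obtain hT_eq_P | hT0 | ⟨u, c, hsup, hTeq⟩ := hface
  · exact absurd hT_eq_P hTP
  · exact absurd hT0 hTne.ne_empty
  have hvc := hv u c ⟨hsup, hTeq⟩
  have hTc : ∀ z ∈ T, ⟪u, z⟫ = c := fun z hz ↦ (hTeq ▸ hz).2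
  have hu : u ≠ 0 := by
    rintro rfl
    obtain ⟨t, ht⟩ := hTne
    have htc := hTc t ht
    simp only [inner_zero_left] at htc hvc
    linarith
  exact intrinsicInterior_subset_interior_convexHull_union hsup hTeq hTP
    (setOf_inner_eq_subset_affineSpan hu hTc hTne hrank) hvc

theorem relint_subset_interior_pseudoStack {d : ℕ}
    (P S : Set (Pt d)) (𝓕 𝓝 : Set (Set (Pt d))) (v : Pt d)
    (h : PseudoStackSetup P S 𝓕 𝓝) (hv : v ∈ PseudoRegion P S 𝓕 𝓝) :
    intrinsicInterior ℝ S ⊆ interior (pseudoStack P v) ∧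
    ∀ N₀ ∈ 𝓝, intrinsicInterior ℝ N₀ ⊆ interior (pseudoStack P v) := by
  obtain ⟨⟨-, hPdim⟩, -, ⟨hS, -⟩, -, hadj, -, -⟩ := h
  refine ⟨hS.intrinsicInterior_subset_interior_pseudoStack hPdim
    fun u c hsup ↦ (hv S u c hS hsup).1 (Or.inl rfl), fun N₀ hN₀ ↦ ?_⟩
  have hN₀facet := (hadj N₀ (Or.inr hN₀)).2.1
  exact hN₀facet.intrinsicInterior_subset_interior_pseudoStack hPdim
    fun u c hsup ↦ (hv N₀ u c hN₀facet hsup).1 (Or.inr hN₀)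
end
end

section
/- Under the hypotheses of the pseudo-stacking construction, for any ridge R between the simplex facet S and a facet in adj(S) \ (F ∪ N), the pseudo-stacked polytope conv(P ∪ {v}) has a facet which is a pyramid over R with apex v. -/
open Set
open scoped Classical

noncomputable section

/-!
Let `⟪u_S, ·⟫ ≥ c_S` and `⟪u_G, ·⟫ ≥ c_G` be the facet inequalities of `S` and `G`. Since `v` is
beyond `S` and beneath `G`, the coefficients `a = ⟪u_G, v⟫ - c_G` and `b = c_S - ⟪u_S, v⟫` are
positive, so `⟪a • u_S + b • u_G, ·⟫ ≥ a c_S + b c_G` is valid on `P` with equality exactly on the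
ridge `S ∩ G`, and with equality at `v`. It therefore supports `conv (P ∪ {v})` along
`conv ((S ∩ G) ∪ {v})`. As the hyperplane of `S` contains the ridge but not `v`, this pyramid has
dimension `(d - 2) + 1`.
-/

open RealInnerProductSpace

section InnerProductSpace

variable {E : Type*} [NormedAddCommGroup E] [InnerProductSpace ℝ E]

lemma inner_eq_of_mem_affineSpan {s : Set E} {u : E} {c : ℝ} (hs : ∀ x ∈ s, ⟪u, x⟫ = c)
    {x : E} (hx : x ∈ affineSpan ℝ s) : ⟪u, x⟫ = c :=
  affineSpan_induction hx hs fun t y z w hy hz hw => by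
    rw [vsub_eq_sub, vadd_eq_add, inner_add_right, inner_smul_right, inner_sub_right, hy, hz, hw]
    ring

lemma convexHull_subset_setOf_le_inner {s : Set E} {u : E} {c : ℝ}
    (hs : ∀ x ∈ s, c ≤ ⟪u, x⟫) : convexHull ℝ s ⊆ {x | c ≤ ⟪u, x⟫} :=
  convexHull_min hs (convex_halfSpace_ge (innerₛₗ ℝ u).isLinear c)

lemma convexHull_sep_inner_eq {s : Set E} {u : E} {c : ℝ} (hs : ∀ x ∈ s, c ≤ ⟪u, x⟫) :
    {x ∈ convexHull ℝ s | ⟪u, x⟫ = c} = convexHull ℝ {x ∈ s | ⟪u, x⟫ = c} := by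
  refine Subset.antisymm ?_ (convexHull_min (fun x hx => ⟨subset_convexHull ℝ s hx.1, hx.2⟩)
    ((convex_convexHull ℝ s).inter (convex_hyperplane (innerₛₗ ℝ u).isLinear c)))
  set T := {x : E | c ≤ ⟪u, x⟫ ∧ (⟪u, x⟫ = c → x ∈ convexHull ℝ {x ∈ s | ⟪u, x⟫ = c})}
  suffices convexHull ℝ s ⊆ T from fun x ⟨hx, hxc⟩ => (this hx).2 hxc
  refine convexHull_min (fun x hx => ⟨hs x hx, fun hxc => subset_convexHull ℝ _ ⟨hx, hxc⟩⟩) ?_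
  rintro x ⟨hx, hxT⟩ y ⟨hy, hyT⟩ a b ha hb hab
  have hsplit : ⟪u, a • x + b • y⟫ - c = a * (⟪u, x⟫ - c) + b * (⟪u, y⟫ - c) := by
    rw [inner_add_right, inner_smul_right, inner_smul_right]
    linear_combination c * hab
  have hax : 0 ≤ a * (⟪u, x⟫ - c) := mul_nonneg ha (sub_nonneg.2 hx)
  have hby : 0 ≤ b * (⟪u, y⟫ - c) := mul_nonneg hb (sub_nonneg.2 hy)
  refine ⟨by linarith, fun hc => ?_⟩
  rw [← sub_eq_zero, hsplit, add_eq_zero_iff_of_nonneg hax hby, mul_eq_zero, mul_eq_zero,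
    sub_eq_zero, sub_eq_zero] at hc
  obtain ⟨rfl | hxc, rfl | hyc⟩ := hc
  · norm_num at hab
  · obtain rfl : b = 1 := by linarith
    simpa using hyT hyc
  · obtain rfl : a = 1 := by linarith
    simpa using hxT hxc
  · exact convex_convexHull ℝ _ (hxT hxc) (hyT hyc) ha hb hab

end InnerProductSpace

theorem finrank_vectorSpan_insert_of_notMem_affineSpan {k V P : Type*} [DivisionRing k]
    [AddCommGroup V] [Module k V] [AddTorsor V P] [FiniteDimensional k V] {s : Set P}
    (hs : s.Nonempty) {p : P} (hp : p ∉ affineSpan k s) :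
    Module.finrank k (vectorSpan k (insert p s)) = Module.finrank k (vectorSpan k s) + 1 := by
  obtain ⟨p₀, hp₀⟩ := hs
  have hp₀' : p₀ ∈ affineSpan k s := mem_affineSpan k hp₀
  rw [← direction_affineSpan, ← affineSpan_insert_affineSpan,
    AffineSubspace.direction_affineSpan_insert hp₀', direction_affineSpan, sup_comm,
    Submodule.finrank_sup_span_singleton]
  rwa [← direction_affineSpan, AffineSubspace.vsub_right_mem_direction_iff_mem hp₀']

section Polytope

variable {d : ℕ}

lemma faceDim_convexHull (s : Set (Pt d)) : faceDim (convexHull ℝ s) = faceDim s := by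
  have hspan : vectorSpan ℝ (convexHull ℝ s) = vectorSpan ℝ s := by
    rw [← direction_affineSpan, affineSpan_convexHull, direction_affineSpan]
  simp only [faceDim, convexHull_eq_empty]
  rw [hspan]

lemma faceDim_insert_of_notMem_affineSpan {s : Set (Pt d)} {v : Pt d}
    (hv : v ∉ affineSpan ℝ s) : faceDim (insert v s) = faceDim s + 1 := by
  rcases s.eq_empty_or_nonempty with rfl | hs
  · simp [faceDim]
  rw [faceDim, faceDim, if_neg (insert_nonempty v s).ne_empty, if_neg hs.ne_empty,
    finrank_vectorSpan_insert_of_notMem_affineSpan hs hv, Nat.cast_succ]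

lemma faceDim_convexHull_union_singleton {s : Set (Pt d)} {v : Pt d}
    (hv : v ∉ affineSpan ℝ s) : faceDim (convexHull ℝ (s ∪ {v})) = faceDim s + 1 := by
  rw [faceDim_convexHull, union_singleton, faceDim_insert_of_notMem_affineSpan hv]

lemma IsFace.exists_supportsFacet {P F : Set (Pt d)} (hF : IsFace P F) :
    ∃ u c, SupportsFacet P F u c := by
  -- the improper faces `P` and `∅` are cut out by the zero functional
  rcases hF with rfl | rfl | hF
  · exact ⟨0, 0, by simp [SupportsFacet]⟩
  · exact ⟨0, -1, by simp [SupportsFacet]⟩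
  · exact hF

lemma SupportsFacet.inter {P F G : Set (Pt d)} {u₁ u₂ : Pt d} {c₁ c₂ a₁ a₂ : ℝ}
    (hF : SupportsFacet P F u₁ c₁) (hG : SupportsFacet P G u₂ c₂) (ha₁ : 0 < a₁) (ha₂ : 0 < a₂) :
    SupportsFacet P (F ∩ G) (a₁ • u₁ + a₂ • u₂) (a₁ * c₁ + a₂ * c₂) := by
  have hsplit : ∀ x, ⟪a₁ • u₁ + a₂ • u₂, x⟫ - (a₁ * c₁ + a₂ * c₂) =
      a₁ * (⟪u₁, x⟫ - c₁) + a₂ * (⟪u₂, x⟫ - c₂) := fun x => by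
    rw [inner_add_left, real_inner_smul_left, real_inner_smul_left]
    ring
  have h₁ : ∀ x ∈ P, 0 ≤ a₁ * (⟪u₁, x⟫ - c₁) := fun x hx =>
    mul_nonneg ha₁.le (sub_nonneg.2 (hF.1 x hx))
  have h₂ : ∀ x ∈ P, 0 ≤ a₂ * (⟪u₂, x⟫ - c₂) := fun x hx =>
    mul_nonneg ha₂.le (sub_nonneg.2 (hG.1 x hx))
  refine ⟨fun x hx => by linarith [hsplit x, h₁ x hx, h₂ x hx], ?_⟩
  ext x
  rw [hF.2, hG.2]
  constructor
  · rintro ⟨⟨hx, hx₁⟩, -, hx₂⟩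
    refine ⟨hx, ?_⟩
    rw [← sub_eq_zero, hsplit, hx₁, hx₂]
    ring
  · rintro ⟨hx, hsum⟩
    rw [← sub_eq_zero, hsplit] at hsum
    obtain ⟨hx₁, hx₂⟩ := (add_eq_zero_iff_of_nonneg (h₁ x hx) (h₂ x hx)).1 hsum
    exact ⟨⟨hx, by simpa [ha₁.ne', sub_eq_zero] using hx₁⟩,
      ⟨hx, by simpa [ha₂.ne', sub_eq_zero] using hx₂⟩⟩

lemma SupportsFacet.pseudoStack {P F : Set (Pt d)} {u v : Pt d} {c : ℝ}
    (hF : SupportsFacet P F u c) (hv : ⟪u, v⟫ = c) :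
    SupportsFacet (pseudoStack P v) (convexHull ℝ (F ∪ {v})) u c := by
  have hPv : ∀ x ∈ P ∪ {v}, c ≤ ⟪u, x⟫ := by
    rintro x (hx | rfl)
    exacts [hF.1 x hx, hv.ge]
  refine ⟨convexHull_subset_setOf_le_inner hPv, ?_⟩
  rw [_root_.pseudoStack, convexHull_sep_inner_eq hPv, hF.2]
  congr 1
  ext x
  by_cases hx : x = v <;> simp [hx, hv]

end Polytope

theorem pyramid_facet_of_pseudoStack_general {d : ℕ}
    (P S : Set (Pt d)) (𝓕 𝓝 : Set (Set (Pt d))) (v : Pt d) (G : Set (Pt d))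
    (hv : v ∈ PseudoRegion P S 𝓕 𝓝)
    (hGadj : AdjacentFacet P S G) (hGF : G ∉ 𝓕) (hGN : G ∉ 𝓝) :
    v ∉ affineSpan ℝ (S ∩ G) ∧
    IsFacet (pseudoStack P v) (convexHull ℝ ((S ∩ G) ∪ {v})) := by
  obtain ⟨hS, hG, hSG, hridge⟩ := hGadj
  obtain ⟨uS, cS, hSsupp⟩ := hS.1.exists_supportsFacet
  obtain ⟨uG, cG, hGsupp⟩ := hG.1.exists_supportsFacet
  have hvS : ⟪uS, v⟫ < cS := (hv S uS cS hS hSsupp).1 (Or.inl rfl)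
  have hvG : cG < ⟪uG, v⟫ := (hv G uG cG hG hGsupp).2.2 ⟨Ne.symm hSG, hGN, hGF⟩
  have hv_notMem : v ∉ affineSpan ℝ (S ∩ G) := fun hmem =>
    hvS.ne (inner_eq_of_mem_affineSpan (fun x hx => (hSsupp.2.subset hx.1).2) hmem)
  have hsupp := hSsupp.inter hGsupp (sub_pos.2 hvG) (sub_pos.2 hvS)
  have hsupp_v : ⟪(⟪uG, v⟫ - cG) • uS + (cS - ⟪uS, v⟫) • uG, v⟫ =
      (⟪uG, v⟫ - cG) * cS + (cS - ⟪uS, v⟫) * cG := by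
    rw [inner_add_left, real_inner_smul_left, real_inner_smul_left]
    ring
  refine ⟨hv_notMem, Or.inr (Or.inr ⟨_, _, hsupp.pseudoStack hsupp_v⟩), ?_⟩
  rw [faceDim_convexHull_union_singleton hv_notMem, hridge]
  ring

theorem pyramid_facet_of_pseudoStack {d : ℕ}
    (P S : Set (Pt d)) (𝓕 𝓝 : Set (Set (Pt d))) (v : Pt d) (G : Set (Pt d))
    (h : PseudoStackSetup P S 𝓕 𝓝) (hv : v ∈ PseudoRegion P S 𝓕 𝓝)
    (hGadj : AdjacentFacet P S G) (hGF : G ∉ 𝓕) (hGN : G ∉ 𝓝) :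
    v ∉ affineSpan ℝ (S ∩ G) ∧
    IsFacet (pseudoStack P v) (convexHull ℝ ((S ∩ G) ∪ {v})) :=
  pyramid_facet_of_pseudoStack_general P S 𝓕 𝓝 v G hv hGadj hGF hGN
end
end
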